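/- arXiv:2306.12698 — 3 statements merged into one kernel-verified Lean document; each statement's English description precedes it below -/
import Mathlib

section
/- For every Q ≥ 2 there exists a family of M = Q(Q−1)+1 sketching vectors α_1, …, α_M ∈ ℂ^Q such that the map sending a Hermitian matrix I ∈ ℂ^{Q×Q} to its SROP measurements (α_1^* I α_1, …, α_M^* I α_M) is injective on the set of Hermitian Q×Q matrices all of whose diagonal entries are equal. Consequently, any such matrix can be reconstructed from these M sketches. -/
/-!
Measure the diagonal once with `e i₀`; constancy of the diagonal gives all of it. For an ordered
pair `i ≠ j` the probe `e i + ω e j` reads `ω I i j + ω̄ I j i` plus diagonal terms, so the two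
probes of the pair `{i, j}` give a `2 × 2` linear system in `(I i j, I j i)` with determinant
`ω² - ω̄²`, which is `4i ≠ 0` for `ω = 1 + i`. There are `Q (Q - 1) + 1` probes in all.
-/

open Matrix

namespace Matrix

variable {n : Type*} [Fintype n] [DecidableEq n]

theorem star_single_add_single_dotProduct_mulVec (H : Matrix n n ℂ) (i j : n) (a b : ℂ) :
    star (Pi.single i a + Pi.single j b) ⬝ᵥ H *ᵥ (Pi.single i a + Pi.single j b)
      = star a * H i i * a + star a * H i j * b + star b * H j i * a + star b * H j j * b := by
  simp only [mulVec_add, mulVec_single, star_add, ← Pi.single_star, dotProduct_add, add_dotProduct,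
    single_dotProduct, Pi.smul_apply, col_apply, op_smul_eq_mul]
  ring

theorem star_single_one_dotProduct_mulVec (H : Matrix n n ℂ) (i : n) :
    star (Pi.single i 1) ⬝ᵥ H *ᵥ Pi.single i 1 = H i i := by
  simp only [Pi.star_single, star_one, mulVec_single_one, single_dotProduct, col_apply, one_mul]

end Matrix

theorem Fintype.card_subtype_fst_ne_snd {n : Type*} [Fintype n] [DecidableEq n] :
    Fintype.card {p : n × n // p.1 ≠ p.2} = Fintype.card n * (Fintype.card n - 1) := by
  rw [Fintype.card_of_subtype (Finset.univ : Finset n).offDiag (by simp), Finset.offDiag_card,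
    Finset.card_univ, Nat.mul_sub_one]

section SROP

variable {n : Type*} [Fintype n] [DecidableEq n]

noncomputable def sropSketch (i₀ : n) : Option {p : n × n // p.1 ≠ p.2} → n → ℂ
  | none => Pi.single i₀ 1
  | some p => Pi.single p.1.1 1 + Pi.single p.1.2 (1 + Complex.I)

theorem eq_zero_of_sropSketch_eq_zero {D : Matrix n n ℂ} (i₀ : n) (hdiag : ∀ i j, D i i = D j j)
    (hD : ∀ t, star (sropSketch i₀ t) ⬝ᵥ D *ᵥ sropSketch i₀ t = 0) : D = 0 := by
  have hdiag_zero (i : n) : D i i = 0 := by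
    simpa [sropSketch, star_single_one_dotProduct_mulVec, hdiag i₀ i] using hD none
  have hoff {i j : n} (hij : i ≠ j) : D i j = 0 := by
    have m₁ := hD (some ⟨(i, j), hij⟩)
    have m₂ := hD (some ⟨(j, i), hij.symm⟩)
    simp only [sropSketch, star_single_add_single_dotProduct_mulVec, hdiag_zero] at m₁ m₂
    simp only [star_one, star_add, Complex.star_def, Complex.conj_I] at m₁ m₂
    have h4I : 4 * Complex.I * D i j = 0 := by
      linear_combination (1 + Complex.I) * m₁ - (1 - Complex.I) * m₂
    simpa [Complex.I_ne_zero] using h4I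
  ext i j
  by_cases hij : i = j
  · subst hij
    exact hdiag_zero i
  · exact hoff hij

theorem eq_of_sropSketch_eq {I J : Matrix n n ℂ} (i₀ : n) (hI : ∀ i j, I i i = I j j)
    (hJ : ∀ i j, J i i = J j j)
    (h : ∀ t, star (sropSketch i₀ t) ⬝ᵥ I *ᵥ sropSketch i₀ t
      = star (sropSketch i₀ t) ⬝ᵥ J *ᵥ sropSketch i₀ t) : I = J := by
  refine sub_eq_zero.mp (eq_zero_of_sropSketch_eq_zero i₀ (fun i j => ?_) fun t => ?_)
  · simp only [Matrix.sub_apply, hI i j, hJ i j]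
  · rw [sub_mulVec, dotProduct_sub, h t, sub_self]

end SROP

theorem sketching_vectors_exist_injective_on_const_diag_hermitian_general
    (Q : ℕ) :
    ∃ α : Fin (Q * (Q - 1) + 1) → (Fin Q → ℂ),
      ∀ I J : Matrix (Fin Q) (Fin Q) ℂ,
        I.IsHermitian → J.IsHermitian →
        (∀ q q' : Fin Q, I q q = I q' q') →
        (∀ q q' : Fin Q, J q q = J q' q') →
        (∀ m : Fin (Q * (Q - 1) + 1),
          dotProduct (star (α m)) (I *ᵥ α m) = dotProduct (star (α m)) (J *ᵥ α m)) →
        I = J := by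
  rcases isEmpty_or_nonempty (Fin Q) with hempty | hnonempty
  · exact ⟨0, fun I J _ _ _ _ _ => Subsingleton.elim I J⟩
  obtain ⟨i₀⟩ := hnonempty
  have hcard : Fintype.card (Option {p : Fin Q × Fin Q // p.1 ≠ p.2}) = Q * (Q - 1) + 1 := by
    rw [Fintype.card_option, Fintype.card_subtype_fst_ne_snd, Fintype.card_fin]
  let e := Fintype.equivFinOfCardEq hcard
  refine ⟨sropSketch i₀ ∘ e.symm, fun I J _ _ hI hJ h => eq_of_sropSketch_eq i₀ hI hJ fun t => ?_⟩
  simpa using h (e t)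

/-- **Nyquist recovery of the interferometric matrix.**
For every `Q ≥ 2` there exists a family of `M = Q(Q-1)+1` sketching vectors
`α_1, …, α_M ∈ ℂ^Q` such that the SROP measurement map
`I ↦ (α_m^* I α_m)_m` is injective on the set of Hermitian `Q×Q` matrices
all of whose diagonal entries are equal. -/
theorem sketching_vectors_exist_injective_on_const_diag_hermitian
    (Q : ℕ) (hQ : 2 ≤ Q) :
    ∃ α : Fin (Q * (Q - 1) + 1) → (Fin Q → ℂ),
      ∀ I J : Matrix (Fin Q) (Fin Q) ℂ,
        I.IsHermitian → J.IsHermitian →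
        (∀ q q' : Fin Q, I q q = I q' q') →
        (∀ q q' : Fin Q, J q q = J q' q') →
        (∀ m : Fin (Q * (Q - 1) + 1),
          dotProduct (star (α m)) (I *ᵥ α m) = dotProduct (star (α m)) (J *ᵥ α m)) →
        I = J :=
  sketching_vectors_exist_injective_on_const_diag_hermitian_general Q
end

section
/- Let B : ℝ^N → ℝ^M be a linear map and let K, K' be positive integers with K' > 2K. Suppose that for both k = K' and k = K+K', B satisfies the RIP_{ℓ2/ℓ1}(Σ_k, m_k, M_k) with 0 < m_k ≤ M_k < ∞, and suppose (1/√2)·m_{K+K'} − M_{K'}·√(K/K') ≥ γ for some γ > 0. Let f ∈ ℝ^N, let y = B(f) + n with ‖n‖₁ ≤ ε, and let f̃ be any minimizer of ‖v‖₁ over the set {v ∈ ℝ^N : ‖y − B(v)‖₁ ≤ ε}. Then ‖f − f̃‖₂ ≤ C₀·‖f − f_K‖₁/√K' + D₀·ε/M, where C₀ = (2+√2)·M_{K'}/γ + 2 and D₀ = (2+√2)/γ, and f_K denotes a best K-term approximation of f (f restricted to a set of K indices of largest-magnitude entries). -/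
/-!
Write `h = f - f̃`. Both `f` and `f̃` are feasible, so `‖B h‖₁ ≤ 2ε`; and `‖f̃‖₁ ≤ ‖f‖₁` gives the
cone constraint `‖h_{T₀ᶜ}‖₁ ≤ ‖h_{T₀}‖₁ + 2‖f_{T₀ᶜ}‖₁`. Cut `T₀ᶜ` into blocks `T₁, T₂, …` of `K'`
indices in decreasing order of `|h|`. Every entry of a block is at most the mean of the previous
block, so `∑_{j ≥ 2} ‖h_{T_j}‖₂ ≤ ‖h_{T₀ᶜ}‖₁ / √K'`. The lower RIP bound on the `(K+K')`-sparse
vector `h_{T₀ ∪ T₁} = h - ∑_{j ≥ 2} h_{T_j}` and the upper RIP bound on the `K'`-sparse blocks then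
bound `‖h_{T₀ ∪ T₁}‖₂`, and the block estimate bounds the remaining part of `‖h‖₂`.
-/

open Finset

/-- The `ℓ1` norm on `Fin n → ℝ`. -/
noncomputable def l1norm {n : ℕ} (x : Fin n → ℝ) : ℝ := ∑ i, |x i|

/-- The `ℓ2` norm on `Fin n → ℝ`. -/
noncomputable def l2norm {n : ℕ} (x : Fin n → ℝ) : ℝ := Real.sqrt (∑ i, x i ^ 2)

/-- `x` has at most `k` nonzero entries. -/
def Sparse {n : ℕ} (k : ℕ) (x : Fin n → ℝ) : Prop :=
  ∃ s : Finset (Fin n), s.card ≤ k ∧ ∀ i ∉ s, x i = 0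

/-- The restriction of `x` to the index set `S` (zero outside `S`). -/
def restr {n : ℕ} (x : Fin n → ℝ) (S : Finset (Fin n)) : Fin n → ℝ :=
  fun i => if i ∈ S then x i else 0

/-- `B` satisfies the `RIP_{ℓ2/ℓ1}(Σ_k, mk, Mk)`:
`mk ‖v‖₂ ≤ (1/M) ‖B v‖₁ ≤ Mk ‖v‖₂` for all `k`-sparse `v`. -/
def RIPl2l1 {N M : ℕ} (B : (Fin N → ℝ) →ₗ[ℝ] (Fin M → ℝ)) (k : ℕ) (mk Mk : ℝ) : Prop :=
  ∀ v : Fin N → ℝ, Sparse k v →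
    mk * l2norm v ≤ (1 / (M : ℝ)) * l1norm (B v) ∧
    (1 / (M : ℝ)) * l1norm (B v) ≤ Mk * l2norm v

lemma Finset.exists_subset_card_eq_min_forall_le {ι α : Type*} [DecidableEq ι] [LinearOrder α]
    (f : ι → α) (s : Finset ι) (k : ℕ) :
    ∃ t ⊆ s, t.card = min k s.card ∧ ∀ i ∈ t, ∀ j ∈ s \ t, f j ≤ f i := by
  induction k with
  | zero => exact ⟨∅, empty_subset s, by simp, by simp⟩
  | succ k ih =>
    obtain ⟨t, hts, htcard, htop⟩ := ih
    by_cases hrest : (s \ t).Nonempty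
    · obtain ⟨j₀, hj₀, hmax⟩ := exists_max_image (s \ t) f hrest
      have hj₀t : j₀ ∉ t := (mem_sdiff.1 hj₀).2
      have hlt : t.card < s.card := card_lt_card (ssubset_iff_subset_ne.2
        ⟨hts, fun hts' => by simp [hts'] at hrest⟩)
      refine ⟨insert j₀ t, insert_subset (mem_sdiff.1 hj₀).1 hts, ?_, ?_⟩
      · rw [card_insert_of_notMem hj₀t]
        omega
      · intro i hi j hj
        have hj' : j ∈ s \ t := sdiff_subset_sdiff subset_rfl (subset_insert j₀ t) hj
        rcases mem_insert.1 hi with rfl | hi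
        · exact hmax j hj'
        · exact htop i hi j hj'
    · obtain rfl : t = s :=
        hts.antisymm (sdiff_eq_empty_iff_subset.1 (not_nonempty_iff_eq_empty.1 hrest))
      exact ⟨t, subset_rfl, by omega, by simp⟩

lemma sqrt_sum_sq_le_sum_abs_div {ι : Type*} {a : ι → ℝ} {s t : Finset ι}
    (hcard : s.card ≤ t.card) (hle : ∀ i ∈ s, ∀ j ∈ t, |a i| ≤ |a j|) :
    √(∑ i ∈ s, a i ^ 2) ≤ (∑ j ∈ t, |a j|) / √t.card := by
  rcases t.eq_empty_or_nonempty with rfl | ht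
  · simp [card_eq_zero.1 (Nat.le_zero.1 hcard)]
  have htcard : (0 : ℝ) < t.card := by exact_mod_cast ht.card_pos
  set c := (∑ j ∈ t, |a j|) / t.card
  have hbound : ∀ i ∈ s, |a i| ≤ c := fun i hi => by
    rw [le_div_iff₀ htcard, ← nsmul_eq_mul', ← sum_const]
    exact sum_le_sum fun j hj => hle i hi j hj
  have hsq : ∑ i ∈ s, a i ^ 2 ≤ t.card * c ^ 2 := calc
    ∑ i ∈ s, a i ^ 2 ≤ ∑ _i ∈ s, c ^ 2 :=
      sum_le_sum fun i hi => by
        simpa only [sq_abs] using pow_le_pow_left₀ (abs_nonneg _) (hbound i hi) 2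
    _ = s.card * c ^ 2 := by rw [sum_const, nsmul_eq_mul]
    _ ≤ t.card * c ^ 2 := by gcongr
  rw [Real.sqrt_le_iff]
  refine ⟨by positivity, hsq.trans_eq ?_⟩
  rw [div_pow, div_pow, Real.sq_sqrt htcard.le]
  field_simp

section

variable {n : ℕ}

lemma l1norm_add_le (x z : Fin n → ℝ) : l1norm (x + z) ≤ l1norm x + l1norm z := by
  rw [l1norm, l1norm, l1norm, ← sum_add_distrib]
  exact sum_le_sum fun i _ => abs_add_le (x i) (z i)

lemma l1norm_sub_le (x z : Fin n → ℝ) : l1norm (x - z) ≤ l1norm x + l1norm z := by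
  rw [l1norm, l1norm, l1norm, ← sum_add_distrib]
  exact sum_le_sum fun i _ => abs_sub (x i) (z i)

lemma l2norm_eq_norm (x : Fin n → ℝ) :
    l2norm x = ‖(WithLp.toLp 2 x : EuclideanSpace ℝ (Fin n))‖ := by
  simp [l2norm, EuclideanSpace.norm_eq]

lemma l2norm_add_le (x z : Fin n → ℝ) : l2norm (x + z) ≤ l2norm x + l2norm z := by
  simpa only [l2norm_eq_norm, WithLp.toLp_add] using norm_add_le _ _

lemma sum_comp_restr {g : ℝ → ℝ} (hg : g 0 = 0) (x : Fin n → ℝ) (s : Finset (Fin n)) :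
    ∑ i, g (restr x s i) = ∑ i ∈ s, g (x i) := by
  simp only [restr, apply_ite g, hg, sum_ite_mem, univ_inter]

lemma l1norm_restr (x : Fin n → ℝ) (s : Finset (Fin n)) :
    l1norm (restr x s) = ∑ i ∈ s, |x i| :=
  sum_comp_restr abs_zero x s

lemma l2norm_restr (x : Fin n → ℝ) (s : Finset (Fin n)) :
    l2norm (restr x s) = √(∑ i ∈ s, x i ^ 2) := by
  rw [l2norm, sum_comp_restr (g := fun t => t ^ 2) (zero_pow two_ne_zero)]

lemma restr_add_restr_compl (x : Fin n → ℝ) (s : Finset (Fin n)) :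
    restr x s + restr x sᶜ = x := by
  ext i
  by_cases hi : i ∈ s <;> simp [restr, hi]

lemma sparse_restr {k : ℕ} (x : Fin n → ℝ) {s : Finset (Fin n)} (hs : s.card ≤ k) :
    Sparse k (restr x s) :=
  ⟨s, hs, fun _ hi => if_neg hi⟩

lemma l2norm_restr_mono (x : Fin n → ℝ) {s t : Finset (Fin n)} (hst : s ⊆ t) :
    l2norm (restr x s) ≤ l2norm (restr x t) := by
  rw [l2norm_restr, l2norm_restr]
  exact Real.sqrt_le_sqrt (sum_le_sum_of_subset_of_nonneg hst fun i _ _ => sq_nonneg (x i))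

lemma l1norm_restr_le_sqrt_card_mul (x : Fin n → ℝ) (s : Finset (Fin n)) :
    l1norm (restr x s) ≤ √s.card * l2norm (restr x s) := by
  have hcs : (∑ i ∈ s, |x i|) ^ 2 ≤ s.card * ∑ i ∈ s, x i ^ 2 := by
    simpa only [sq_abs] using sq_sum_le_card_mul_sum_sq (s := s) (f := fun i => |x i|)
  rw [l1norm_restr, l2norm_restr, ← Real.sqrt_mul (Nat.cast_nonneg _)]
  exact Real.le_sqrt_of_sq_le hcs

lemma restr_empty (x : Fin n → ℝ) : restr x ∅ = 0 := by
  ext i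
  simp [restr]

lemma restr_add_restr_sdiff (x : Fin n → ℝ) {s t : Finset (Fin n)} (hts : t ⊆ s) :
    restr x t + restr x (s \ t) = restr x s := by
  ext i
  by_cases hit : i ∈ t
  · simp [restr, hit, hts hit]
  · by_cases his : i ∈ s <;> simp [restr, hit, his]

lemma l1norm_map_sub_le {M : ℕ} (B : (Fin n → ℝ) →ₗ[ℝ] (Fin M → ℝ)) (y : Fin M → ℝ)
    (u w : Fin n → ℝ) : l1norm (B (u - w)) ≤ l1norm (y - B w) + l1norm (y - B u) := by
  rw [map_sub, ← sub_sub_sub_cancel_left (B w) (B u) y]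
  exact l1norm_sub_le _ _

lemma l1norm_restr_compl_sub_le {x z : Fin n → ℝ} (hz : l1norm z ≤ l1norm x)
    (s : Finset (Fin n)) :
    l1norm (restr (x - z) sᶜ) ≤ l1norm (restr (x - z) s) + 2 * l1norm (restr x sᶜ) := by
  have hon : ∑ i ∈ s, (|x i| - |x i - z i|) ≤ ∑ i ∈ s, |z i| :=
    sum_le_sum fun i _ => by
      simpa only [sub_sub_cancel] using abs_sub_abs_le_abs_sub (x i) (x i - z i)
  have hoff : ∑ i ∈ sᶜ, (|x i - z i| - |x i|) ≤ ∑ i ∈ sᶜ, |z i| :=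
    sum_le_sum fun i _ => by
      simpa only [sub_sub_cancel_left, abs_neg] using abs_sub_abs_le_abs_sub (x i - z i) (x i)
  rw [l1norm, l1norm, ← sum_add_sum_compl s, ← sum_add_sum_compl s] at hz
  simp only [l1norm_restr, Pi.sub_apply, sum_sub_distrib] at hon hoff ⊢
  linarith

def SparseDecomposable (k : ℕ) (v : Fin n → ℝ) (c : ℝ) : Prop :=
  ∃ us : List (Fin n → ℝ), (∀ u ∈ us, Sparse k u) ∧ us.sum = v ∧ (us.map l2norm).sum ≤ c

namespace SparseDecomposable

variable {k : ℕ} {v : Fin n → ℝ} {c : ℝ}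

lemma zero (hc : 0 ≤ c) : SparseDecomposable k (0 : Fin n → ℝ) c :=
  ⟨[], by simp, rfl, by simpa using hc⟩

lemma sparse_add {u : Fin n → ℝ} (hu : Sparse k u) (hv : SparseDecomposable k v c) :
    SparseDecomposable k (u + v) (l2norm u + c) := by
  obtain ⟨us, hsparse, rfl, hc⟩ := hv
  refine ⟨u :: us, ?_, List.sum_cons, by simpa using hc⟩
  simpa [hu] using hsparse

lemma mono {c' : ℝ} (hv : SparseDecomposable k v c) (hc : c ≤ c') : SparseDecomposable k v c' :=
  let ⟨us, hsparse, hsum, hus⟩ := hv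
  ⟨us, hsparse, hsum, hus.trans hc⟩

lemma l2norm_le (hv : SparseDecomposable k v c) : l2norm v ≤ c := by
  obtain ⟨us, -, rfl, hc⟩ := hv
  exact (List.le_sum_of_subadditive l2norm (by simp [l2norm]) l2norm_add_le us).trans hc

end SparseDecomposable

lemma RIPl2l1.l1norm_le_of_sparseDecomposable {M k : ℕ} {B : (Fin n → ℝ) →ₗ[ℝ] (Fin M → ℝ)}
    {mk Mk : ℝ} (hB : RIPl2l1 B k mk Mk) (hMk : 0 ≤ Mk) {v : Fin n → ℝ} {c : ℝ}
    (hv : SparseDecomposable k v c) :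
    1 / (M : ℝ) * l1norm (B v) ≤ Mk * c := by
  obtain ⟨us, hsparse, rfl, hc⟩ := hv
  have hsub : ∀ u w : Fin n → ℝ,
      1 / (M : ℝ) * l1norm (B (u + w)) ≤ 1 / M * l1norm (B u) + 1 / M * l1norm (B w) :=
    fun u w => by
      rw [map_add, ← mul_add]
      exact mul_le_mul_of_nonneg_left (l1norm_add_le _ _) (by positivity)
  calc 1 / (M : ℝ) * l1norm (B us.sum)
      ≤ (us.map fun u => 1 / (M : ℝ) * l1norm (B u)).sum :=
        List.le_sum_of_subadditive (fun u => 1 / (M : ℝ) * l1norm (B u)) (by simp [l1norm]) hsub us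
    _ ≤ (us.map fun u => Mk * l2norm u).sum := List.sum_le_sum fun u hu => (hB u (hsparse u hu)).2
    _ = Mk * (us.map l2norm).sum := List.sum_map_mul_left _ _ _
    _ ≤ Mk * c := mul_le_mul_of_nonneg_left hc hMk

lemma RIPl2l1.mul_l2norm_restr_le {M k : ℕ} {B : (Fin n → ℝ) →ₗ[ℝ] (Fin M → ℝ)} {mk Mk : ℝ}
    (hB : RIPl2l1 B k mk Mk) (x : Fin n → ℝ) {s : Finset (Fin n)} (hs : s.card ≤ k) :
    mk * l2norm (restr x s) ≤ 1 / M * l1norm (B x) + 1 / M * l1norm (B (restr x sᶜ)) := by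
  refine (hB _ (sparse_restr x hs)).1.trans ?_
  rw [← mul_add, eq_sub_of_add_eq (restr_add_restr_compl x s), map_sub]
  exact mul_le_mul_of_nonneg_left (l1norm_sub_le _ _) (by positivity)

/-- `t` collects the `k` largest entries of `x` on `s`; the rest is cut into consecutive blocks of
`k` entries, each dominated entrywise by the previous one. -/
lemma exists_restr_sdiff_sparseDecomposable (x : Fin n → ℝ) {k : ℕ} (hk : 0 < k)
    (s : Finset (Fin n)) :
    ∃ t ⊆ s, t.card ≤ k ∧ SparseDecomposable k (restr x (s \ t)) (l1norm (restr x s) / √k) := by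
  induction s using Finset.strongInduction with
  | H s ih =>
  obtain ⟨t, hts, htcard, htop⟩ := exists_subset_card_eq_min_forall_le (fun i => |x i|) s k
  refine ⟨t, hts, htcard ▸ min_le_left _ _, ?_⟩
  rcases (s \ t).eq_empty_or_nonempty with hrest | hrest
  · rw [hrest, restr_empty]
    exact SparseDecomposable.zero (div_nonneg (sum_nonneg fun i _ => abs_nonneg _) (by positivity))
  have hlt : t.card < s.card := card_lt_card (Finset.ssubset_iff_subset_ne.2
    ⟨hts, fun hts' => by simp [hts'] at hrest⟩)
  have htk : t.card = k := by omega
  have ht : t.Nonempty := card_pos.1 (htk ▸ hk)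
  obtain ⟨t', ht's, ht'card, hdec⟩ := ih (s \ t) (sdiff_ssubset hts ht)
  have hhead : l2norm (restr x t') ≤ l1norm (restr x t) / √k := by
    rw [l2norm_restr, l1norm_restr, ← htk]
    exact sqrt_sum_sq_le_sum_abs_div (htk ▸ ht'card) fun i hi j hj => htop j hj i (ht's hi)
  rw [← restr_add_restr_sdiff x ht's]
  refine (hdec.sparse_add (sparse_restr x ht'card)).mono ?_
  have hsplit : l1norm (restr x s) = l1norm (restr x t) + l1norm (restr x (s \ t)) := by
    simp only [l1norm_restr]
    rw [add_comm, sum_sdiff hts]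
  rw [hsplit, add_div]
  exact add_le_add_left hhead _

end

lemma sqrt_div_le_inv_sqrt_two {a b : ℕ} (h : 2 * a ≤ b) : √((a : ℝ) / b) ≤ 1 / √2 := by
  rw [one_div, ← Real.sqrt_inv]
  refine Real.sqrt_le_sqrt (div_le_of_le_mul₀ (Nat.cast_nonneg _) (by norm_num) ?_)
  have : (2 * a : ℝ) ≤ b := by exact_mod_cast h
  linarith

lemma le_of_rip_cone_estimates {L A E e δ m Mk ρ γ : ℝ} (hA : 0 ≤ A) (hm : 0 ≤ m)
    (hMk : 0 ≤ Mk) (hγ : 0 < γ) (hρ : ρ ≤ 1 / √2) (hgap : γ ≤ 1 / √2 * m - Mk * ρ)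
    (hrip : m * A ≤ 2 * δ + Mk * E) (hcone : E ≤ ρ * A + 2 * e) (hL : L ≤ A + E) :
    L ≤ ((2 + √2) * Mk / γ + 2) * e + (2 + √2) / γ * δ := by
  have hs2 : 1 / √2 ≤ 1 := by rw [div_le_one (by positivity)]; exact Real.one_le_sqrt.2 one_le_two
  have hγA : γ * A ≤ 2 * δ + 2 * Mk * e := calc
    γ * A ≤ (m - Mk * ρ) * A := by gcongr; nlinarith
    _ ≤ 2 * δ + Mk * (E - ρ * A) := by linarith
    _ ≤ 2 * δ + 2 * Mk * e := by nlinarith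
  have hLA : L ≤ (2 + √2) / 2 * A + 2 * e := by
    have : (2 + √2) / 2 = 1 + 1 / √2 := by
      field_simp
      linear_combination Real.sq_sqrt (zero_le_two (α := ℝ))
    rw [this]
    nlinarith
  calc L ≤ (2 + √2) / 2 * A + 2 * e := hLA
    _ ≤ (2 + √2) / 2 * ((2 * δ + 2 * Mk * e) / γ) + 2 * e := by
        gcongr
        rwa [le_div_iff₀ hγ, mul_comm]
    _ = ((2 + √2) * Mk / γ + 2) * e + (2 + √2) / γ * δ := by field_simp; ring

theorem bpdn_l1_instance_optimality_general
    {N M K K' : ℕ} (hK' : 0 < K')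
    (hKK' : 2 * K < K')
    (B : (Fin N → ℝ) →ₗ[ℝ] (Fin M → ℝ))
    (mK' MK' mKK' MKK' : ℝ)
    (hmK' : 0 < mK') (hMK' : mK' ≤ MK')
    (hmKK' : 0 < mKK')
    (hRIP1 : RIPl2l1 B K' mK' MK')
    (hRIP2 : RIPl2l1 B (K + K') mKK' MKK')
    (γ : ℝ) (hγ : 0 < γ)
    (hgap : γ ≤ (1 / Real.sqrt 2) * mKK' - MK' * Real.sqrt ((K : ℝ) / (K' : ℝ)))
    (f : Fin N → ℝ) (nv : Fin M → ℝ) (ε : ℝ) (hn : l1norm nv ≤ ε)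
    (y : Fin M → ℝ) (hy : y = fun i => B f i + nv i)
    (T₀ : Finset (Fin N)) (hT₀card : T₀.card = K)
    (ftil : Fin N → ℝ)
    (hfeas : l1norm (fun i => y i - B ftil i) ≤ ε)
    (hopt : ∀ v : Fin N → ℝ, l1norm (fun i => y i - B v i) ≤ ε →
      l1norm ftil ≤ l1norm v) :
    l2norm (fun i => f i - ftil i)
      ≤ ((2 + Real.sqrt 2) * MK' / γ + 2) * (l1norm (restr f T₀ᶜ) / Real.sqrt (K' : ℝ))
        + ((2 + Real.sqrt 2) / γ) * (ε / (M : ℝ)) := by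
  classical
  set h : Fin N → ℝ := f - ftil
  have hfeasf : l1norm (fun i => y i - B f i) ≤ ε := by
    subst hy
    simpa using hn
  have htube : l1norm (B h) ≤ ε + ε :=
    (l1norm_map_sub_le B y f ftil).trans (add_le_add hfeas hfeasf)
  obtain ⟨T₁, -, hT₁card, hdec⟩ := exists_restr_sdiff_sparseDecomposable h hK' T₀ᶜ
  rw [sdiff_eq_inter_compl, ← compl_union] at hdec
  set A := l2norm (restr h (T₀ ∪ T₁))
  set E := l1norm (restr h T₀ᶜ) / √K'
  have hrip : mKK' * A ≤ 2 * (ε / M) + MK' * E := calc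
    mKK' * A ≤ 1 / M * l1norm (B h) + 1 / M * l1norm (B (restr h (T₀ ∪ T₁)ᶜ)) :=
      hRIP2.mul_l2norm_restr_le h ((card_union_le _ _).trans (by omega))
    _ ≤ 1 / M * (ε + ε) + MK' * E :=
      add_le_add (by gcongr) (hRIP1.l1norm_le_of_sparseDecomposable (hmK'.le.trans hMK') hdec)
    _ = 2 * (ε / M) + MK' * E := by ring
  have hcone : E ≤ √((K : ℝ) / K') * A + 2 * (l1norm (restr f T₀ᶜ) / √K') := by
    have hT₀ : l1norm (restr h T₀) ≤ √K * A := calc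
      l1norm (restr h T₀) ≤ √T₀.card * l2norm (restr h T₀) := l1norm_restr_le_sqrt_card_mul h T₀
      _ ≤ √K * A := by rw [hT₀card]; gcongr; exact l2norm_restr_mono h subset_union_left
    calc E ≤ (√K * A + 2 * l1norm (restr f T₀ᶜ)) / √K' :=
          div_le_div_of_nonneg_right (by linarith [l1norm_restr_compl_sub_le (hopt f hfeasf) T₀])
            (Real.sqrt_nonneg _)
      _ = _ := by rw [Real.sqrt_div' _ (Nat.cast_nonneg _)]; ring
  have hsplit : l2norm h ≤ A + E := by
    conv_lhs => rw [← restr_add_restr_compl h (T₀ ∪ T₁)]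
    exact (l2norm_add_le _ _).trans (add_le_add le_rfl hdec.l2norm_le)
  exact le_of_rip_cone_estimates (Real.sqrt_nonneg _) hmKK'.le (hmK'.le.trans hMK') hγ
    (sqrt_div_le_inv_sqrt_two hKK'.le) hgap hrip hcone hsplit

/-- **`ℓ2/ℓ1` instance optimality of `BPDN_{ℓ1}`** (Proposition 1).
If `B` has the `RIP_{ℓ2/ℓ1}` on `Σ_{K'}` and `Σ_{K+K'}` with `K' > 2K` and
`(1/√2) m_{K+K'} − M_{K'} √(K/K') ≥ γ > 0`, then any `ℓ1`-minimizer `f̃` over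
the feasible set `{v : ‖y − B v‖₁ ≤ ε}`, where `y = B f + n` with `‖n‖₁ ≤ ε`,
satisfies `‖f − f̃‖₂ ≤ C₀ ‖f − f_K‖₁/√K' + D₀ ε/M` with
`C₀ = (2+√2) M_{K'}/γ + 2` and `D₀ = (2+√2)/γ`. -/
theorem bpdn_l1_instance_optimality
    {N M K K' : ℕ} (hM : 0 < M) (hK : 0 < K) (hK' : 0 < K')
    (hKK' : 2 * K < K')
    (B : (Fin N → ℝ) →ₗ[ℝ] (Fin M → ℝ))
    (mK' MK' mKK' MKK' : ℝ)
    (hmK' : 0 < mK') (hMK' : mK' ≤ MK')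
    (hmKK' : 0 < mKK') (hMKK' : mKK' ≤ MKK')
    (hRIP1 : RIPl2l1 B K' mK' MK')
    (hRIP2 : RIPl2l1 B (K + K') mKK' MKK')
    (γ : ℝ) (hγ : 0 < γ)
    (hgap : γ ≤ (1 / Real.sqrt 2) * mKK' - MK' * Real.sqrt ((K : ℝ) / (K' : ℝ)))
    (f : Fin N → ℝ) (nv : Fin M → ℝ) (ε : ℝ) (hn : l1norm nv ≤ ε)
    (y : Fin M → ℝ) (hy : y = fun i => B f i + nv i)
    (T₀ : Finset (Fin N)) (hT₀card : T₀.card = K)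
    (hT₀max : ∀ i ∈ T₀, ∀ j ∉ T₀, |f j| ≤ |f i|)
    (ftil : Fin N → ℝ)
    (hfeas : l1norm (fun i => y i - B ftil i) ≤ ε)
    (hopt : ∀ v : Fin N → ℝ, l1norm (fun i => y i - B v i) ≤ ε →
      l1norm ftil ≤ l1norm v) :
    l2norm (fun i => f i - ftil i)
      ≤ ((2 + Real.sqrt 2) * MK' / γ + 2) * (l1norm (restr f T₀ᶜ) / Real.sqrt (K' : ℝ))
        + ((2 + Real.sqrt 2) / γ) * (ε / (M : ℝ)) :=
  bpdn_l1_instance_optimality_general hK' hKK' B mK' MK' mKK' MKK' hmK' hMK' hmKK' hRIP1 hRIP2 γ hγ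
    hgap f nv ε hn y hy T₀ hT₀card ftil hfeas hopt
end

section
/- Let α ∈ ℂ^Q be a random vector with i.i.d. components distributed as a complex random variable α₀ with E α₀ = 0, E α₀² = 0, E |α₀|² = μ₂ and E |α₀|⁴ = μ₄ < ∞. Then for every Hermitian matrix I ∈ ℂ^{Q×Q}, E[(α^* I α) · α α^*] = μ₂² · I + (μ₄ − 2μ₂²) · I_d + μ₂² · tr(I) · Id_Q, where I_d is the diagonal part of I. In particular, if I is hollow, then E[(α^* I α) · α α^*] = μ₂² · I. -/
/-!
Expanding `α^* I α`, each entry of `E[(α^* I α) α α^*]` is a combination, with coefficients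
`I i j`, of fourth moments `E[ᾱ_i α_j α_k ᾱ_l]`. By independence such a moment factors into mixed
moments `E[ᾱ₀^a α₀^b]` of single coordinates, and since `E α₀ = E α₀² = 0` a factor vanishes as
soon as some coordinate occurs once, or twice on the same side of the conjugation. Only the
pairings `i = j, k = l` and `i = k, j = l` survive, giving
`μ₂² (δ_ij δ_kl + δ_ik δ_jl) + (μ₄ - 2 μ₂²) δ_ijkl`; contracting with `I` yields the formula.
-/

open MeasureTheory ProbabilityTheory Matrix ComplexConjugate Finset

theorem prod_pow_single_add_single {ι M : Type*} [Fintype ι] [DecidableEq ι] [CommMonoid M]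
    (x : ι → M) (i j : ι) :
    ∏ n, x n ^ ((Pi.single i 1 + Pi.single j 1 : ι → ℕ) n) = x i * x j := by
  simp only [Pi.add_apply, pow_add, prod_mul_distrib, Pi.single_apply, pow_ite, pow_one, pow_zero,
    prod_ite_eq', mem_univ, if_true]

section FourthMomentTensor

variable {ι R : Type*} [Fintype ι] [DecidableEq ι] [CommRing R]

def fourthMomentTensor (s t : R) (i j k l : ι) : R :=
  (if i = j ∧ k = l then s else 0) + (if i = k ∧ j = l then s else 0) +
    (if i = j ∧ j = k ∧ k = l then t else 0)

theorem prod_single_add_single_eq_fourthMomentTensor (m : ℕ → ℕ → R) (h00 : m 0 0 = 1)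
    (h10 : m 1 0 = 0) (h01 : m 0 1 = 0) (h20 : m 2 0 = 0) (h02 : m 0 2 = 0) (i j k l : ι) :
    ∏ n, m ((Pi.single i 1 + Pi.single l 1 : ι → ℕ) n) ((Pi.single j 1 + Pi.single k 1 : ι → ℕ) n) =
      fourthMomentTensor (m 1 1 ^ 2) (m 2 2 - 2 * m 1 1 ^ 2) i j k l := by
  rw [← prod_subset (subset_univ {i, j, k, l}) fun n _ hn => by
    simp only [mem_insert, mem_singleton, not_or] at hn
    simp [hn, h00]]
  unfold fourthMomentTensor
  by_cases hij : i = j <;> by_cases hik : i = k <;> by_cases hil : i = l <;>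
    by_cases hjk : j = k <;> by_cases hjl : j = l <;> by_cases hkl : k = l <;>
    simp_all [Pi.single_apply, prod_insert, Ne.symm] <;> ring

theorem Matrix.of_sum_mul_fourthMomentTensor (I : Matrix ι ι R) (s t : R) :
    of (fun p r => ∑ i, ∑ j, I i j * fourthMomentTensor s t i j p r) =
      s • I + t • diagonal (fun i => I i i) + (s * I.trace) • 1 := by
  ext p r
  by_cases hpr : p = r
  · subst hpr
    simp [fourthMomentTensor, ite_and, mul_add, sum_add_distrib, trace, ← sum_mul]
    ring
  · simp [fourthMomentTensor, ite_and, hpr, mul_add, sum_add_distrib, mul_comm]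

end FourthMomentTensor

section MixedMoment

variable {Ω : Type*} [MeasurableSpace Ω] {μ : Measure Ω}

noncomputable def mixedMoment (μ : Measure Ω) (Z : Ω → ℂ) (a b : ℕ) : ℂ :=
  ∫ ω, conj (Z ω) ^ a * Z ω ^ b ∂μ

theorem mixedMoment_zero_zero [IsProbabilityMeasure μ] (Z : Ω → ℂ) : mixedMoment μ Z 0 0 = 1 := by
  simp [mixedMoment]

theorem mixedMoment_zero_left (Z : Ω → ℂ) (b : ℕ) :
    mixedMoment μ Z 0 b = ∫ ω, Z ω ^ b ∂μ := by
  simp [mixedMoment]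

theorem mixedMoment_swap (Z : Ω → ℂ) (a b : ℕ) :
    mixedMoment μ Z b a = conj (mixedMoment μ Z a b) := by
  simp [mixedMoment, ← integral_conj, mul_comm]

theorem mixedMoment_self (Z : Ω → ℂ) (n : ℕ) :
    mixedMoment μ Z n n = ((∫ ω, ‖Z ω‖ ^ (2 * n) ∂μ : ℝ) : ℂ) := by
  rw [mixedMoment, ← integral_complex_ofReal]
  congr 1 with ω
  rw [← mul_pow, Complex.conj_mul', pow_mul]
  push_cast; ring

variable {ι : Type*} [Fintype ι] {X : ι → Ω → ℂ} {X₀ : Ω → ℂ}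

theorem ProbabilityTheory.iIndepFun.integral_prod_conj_pow_mul_pow (hX : iIndepFun X μ)
    (hident : ∀ n, IdentDistrib (X n) X₀ μ μ) (a b : ι → ℕ) :
    ∫ ω, ∏ n, conj (X n ω) ^ a n * X n ω ^ b n ∂μ = ∏ n, mixedMoment μ X₀ (a n) (b n) := by
  rw [hX.integral_fun_prod_comp (f := fun n z => conj z ^ a n * z ^ b n)
    (fun n => (hident n).aemeasurable_fst) fun n => by fun_prop]
  exact prod_congr rfl fun n _ =>
    ((hident n).comp (u := fun z => conj z ^ a n * z ^ b n) (by fun_prop)).integral_eq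

theorem ProbabilityTheory.iIndepFun.integral_conj_mul_mul_mul_conj [IsProbabilityMeasure μ]
    [DecidableEq ι] (hX : iIndepFun X μ) (hident : ∀ n, IdentDistrib (X n) X₀ μ μ)
    (hmean : ∫ ω, X₀ ω ∂μ = 0) (hsq : ∫ ω, X₀ ω ^ 2 ∂μ = 0) (i j k l : ι) :
    ∫ ω, conj (X i ω) * X j ω * X k ω * conj (X l ω) ∂μ =
      fourthMomentTensor (mixedMoment μ X₀ 1 1 ^ 2)
        (mixedMoment μ X₀ 2 2 - 2 * mixedMoment μ X₀ 1 1 ^ 2) i j k l := by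
  have h01 : mixedMoment μ X₀ 0 1 = 0 := by simpa [mixedMoment_zero_left] using hmean
  have h02 : mixedMoment μ X₀ 0 2 = 0 := by simpa [mixedMoment_zero_left] using hsq
  rw [← prod_single_add_single_eq_fourthMomentTensor _ (mixedMoment_zero_zero X₀)
    (by rw [mixedMoment_swap, h01, map_zero]) h01 (by rw [mixedMoment_swap, h02, map_zero]) h02,
    ← hX.integral_prod_conj_pow_mul_pow hident]
  congr 1 with ω
  rw [prod_mul_distrib, prod_pow_single_add_single, prod_pow_single_add_single]
  ring

end MixedMoment

theorem MeasureTheory.MemLp.integrable_mul_mul_mul {Ω 𝕜 : Type*} [MeasurableSpace Ω]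
    {μ : Measure Ω} [NormedCommRing 𝕜] {f₁ f₂ f₃ f₄ : Ω → 𝕜} (h₁ : MemLp f₁ 4 μ)
    (h₂ : MemLp f₂ 4 μ) (h₃ : MemLp f₃ 4 μ) (h₄ : MemLp f₄ 4 μ) :
    Integrable (fun ω => f₁ ω * f₂ ω * f₃ ω * f₄ ω) μ := by
  have : ENNReal.HolderTriple 4 4 2 := ⟨by
    rw [← two_mul, show (4 : ENNReal) = 2 * 2 by norm_num, ENNReal.mul_inv (by simp) (by simp),
      ← mul_assoc, ENNReal.mul_inv_cancel (by simp) (by simp), one_mul]⟩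
  simpa only [Pi.mul_def, mul_assoc] using
    (h₂.mul' h₁ (r := 2)).integrable_mul (h₄.mul' h₃ (r := 2))

theorem integral_dotProduct_mulVec_mul_mul_conj {Ω ι : Type*} [MeasurableSpace Ω] {μ : Measure Ω}
    [Fintype ι] (α : Ω → ι → ℂ) (I : Matrix ι ι ℂ) (p r : ι)
    (hint : ∀ i j, Integrable (fun ω => conj (α ω i) * α ω j * α ω p * conj (α ω r)) μ) :
    ∫ ω, (star (α ω) ⬝ᵥ I *ᵥ α ω) * (α ω p * conj (α ω r)) ∂μ =
      ∑ i, ∑ j, I i j * ∫ ω, conj (α ω i) * α ω j * α ω p * conj (α ω r) ∂μ := by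
  have hexpand : ∀ ω, (star (α ω) ⬝ᵥ I *ᵥ α ω) * (α ω p * conj (α ω r)) =
      ∑ i, ∑ j, I i j * (conj (α ω i) * α ω j * α ω p * conj (α ω r)) := fun ω => by
    simp only [dotProduct, mulVec, Pi.star_apply, RCLike.star_def, sum_mul, mul_sum]
    exact sum_congr rfl fun i _ => sum_congr rfl fun j _ => by ring
  have hint' : ∀ i j, Integrable
      (fun ω => I i j * (conj (α ω i) * α ω j * α ω p * conj (α ω r))) μ :=
    fun i j => (hint i j).const_mul _
  simp_rw [hexpand]
  rw [integral_finsetSum _ fun i _ => integrable_finsetSum _ fun j _ => hint' i j]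
  refine sum_congr rfl fun i _ => ?_
  rw [integral_finsetSum _ fun j _ => hint' i j]
  simp_rw [integral_const_mul]

theorem ProbabilityTheory.iIndepFun.of_integral_dotProduct_mulVec_mul {Ω ι : Type*}
    [MeasurableSpace Ω] {μ : Measure Ω} [IsProbabilityMeasure μ] [Fintype ι] [DecidableEq ι]
    {α : Ω → ι → ℂ} {α₀ : Ω → ℂ} (hindep : iIndepFun (fun q ω => α ω q) μ)
    (hident : ∀ q, IdentDistrib (fun ω => α ω q) α₀ μ μ) (hmean : ∫ ω, α₀ ω ∂μ = 0)
    (hsq : ∫ ω, α₀ ω ^ 2 ∂μ = 0) (hL4 : Integrable (fun ω => ‖α₀ ω‖ ^ 4) μ)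
    (I : Matrix ι ι ℂ) :
    of (fun q r => ∫ ω, (star (α ω) ⬝ᵥ I *ᵥ α ω) * (α ω q * conj (α ω r)) ∂μ) =
      mixedMoment μ α₀ 1 1 ^ 2 • I +
        (mixedMoment μ α₀ 2 2 - 2 * mixedMoment μ α₀ 1 1 ^ 2) • diagonal (fun i => I i i) +
          (mixedMoment μ α₀ 1 1 ^ 2 * I.trace) • 1 := by
  have hL4q : ∀ q, MemLp (fun ω => α ω q) 4 μ := fun q =>
    (hident q).memLp_iff.2 <| (integrable_norm_rpow_iff
      (hident q).aemeasurable_snd.aestronglyMeasurable (by norm_num) (by norm_num)).1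
        (by simpa using hL4)
  rw [← of_sum_mul_fourthMomentTensor]
  ext p r
  rw [of_apply, of_apply, integral_dotProduct_mulVec_mul_mul_conj α I p r fun i j =>
    (hL4q i).star.integrable_mul_mul_mul (hL4q j) (hL4q p) (hL4q r).star]
  simp only [hindep.integral_conj_mul_mul_mul_conj hident hmean hsq]

theorem srop_anisotropy_general
    {Ω : Type*} [MeasurableSpace Ω] (μ : Measure Ω) [IsProbabilityMeasure μ]
    {Q : ℕ} (α : Ω → Fin Q → ℂ) (α₀ : Ω → ℂ) (μ₂ μ₄ : ℝ)
    (hindep : iIndepFun (fun q ω => α ω q) μ)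
    (hident : ∀ q : Fin Q, IdentDistrib (fun ω => α ω q) α₀ μ μ)
    (hmean : ∫ ω, α₀ ω ∂μ = 0)
    (hsq : ∫ ω, (α₀ ω) ^ 2 ∂μ = 0)
    (hL4 : Integrable (fun ω => ‖α₀ ω‖ ^ 4) μ)
    (hmom2 : ∫ ω, ‖α₀ ω‖ ^ 2 ∂μ = μ₂)
    (hmom4 : ∫ ω, ‖α₀ ω‖ ^ 4 ∂μ = μ₄)
    (I : Matrix (Fin Q) (Fin Q) ℂ) :
    ((Matrix.of fun q r : Fin Q =>
        ∫ ω, (dotProduct (star (α ω)) (I *ᵥ α ω)) * (α ω q * (starRingEnd ℂ) (α ω r)) ∂μ)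
      = ((μ₂ : ℂ) ^ 2) • I
        + (((μ₄ : ℂ) - 2 * (μ₂ : ℂ) ^ 2)) • Matrix.diagonal (fun i => I i i)
        + (((μ₂ : ℂ) ^ 2) * I.trace) • (1 : Matrix (Fin Q) (Fin Q) ℂ))
    ∧ ((∀ q, I q q = 0) →
        (Matrix.of fun q r : Fin Q =>
          ∫ ω, (dotProduct (star (α ω)) (I *ᵥ α ω)) * (α ω q * (starRingEnd ℂ) (α ω r)) ∂μ)
        = ((μ₂ : ℂ) ^ 2) • I) := by
  have hm11 : mixedMoment μ α₀ 1 1 = μ₂ := by rw [mixedMoment_self, hmom2]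
  have hm22 : mixedMoment μ α₀ 2 2 = μ₄ := by rw [mixedMoment_self, hmom4]
  have hmain := hindep.of_integral_dotProduct_mulVec_mul hident hmean hsq hL4 I
  rw [hm11, hm22] at hmain
  refine ⟨hmain, fun hhollow => ?_⟩
  have htrace : I.trace = 0 := by simp [trace, hhollow]
  simp [hmain, hhollow, htrace]

/-- **Anisotropy of the SROP operator** (Lemma 1, second part).
If the components of `α` are i.i.d. copies of a complex random variable `α₀`
with `E α₀ = 0`, `E α₀² = 0`, `E|α₀|² = μ₂` and `E|α₀|⁴ = μ₄ < ∞`, then for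
every Hermitian `I`,
`E[(α^* I α) αα^*] = μ₂² I + (μ₄ − 2μ₂²) I_d + μ₂² (tr I) Id`; in particular
if `I` is hollow then `E[(α^* I α) αα^*] = μ₂² I`. -/
theorem srop_anisotropy
    {Ω : Type*} [MeasurableSpace Ω] (μ : Measure Ω) [IsProbabilityMeasure μ]
    {Q : ℕ} (α : Ω → Fin Q → ℂ) (α₀ : Ω → ℂ) (μ₂ μ₄ : ℝ)
    (hindep : iIndepFun (fun q ω => α ω q) μ)
    (hident : ∀ q : Fin Q, IdentDistrib (fun ω => α ω q) α₀ μ μ)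
    (hmean : ∫ ω, α₀ ω ∂μ = 0)
    (hsq : ∫ ω, (α₀ ω) ^ 2 ∂μ = 0)
    (hL4 : Integrable (fun ω => ‖α₀ ω‖ ^ 4) μ)
    (hmom2 : ∫ ω, ‖α₀ ω‖ ^ 2 ∂μ = μ₂)
    (hmom4 : ∫ ω, ‖α₀ ω‖ ^ 4 ∂μ = μ₄)
    (I : Matrix (Fin Q) (Fin Q) ℂ) (hI : I.IsHermitian) :
    ((Matrix.of fun q r : Fin Q =>
        ∫ ω, (dotProduct (star (α ω)) (I *ᵥ α ω)) * (α ω q * (starRingEnd ℂ) (α ω r)) ∂μ)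
      = ((μ₂ : ℂ) ^ 2) • I
        + (((μ₄ : ℂ) - 2 * (μ₂ : ℂ) ^ 2)) • Matrix.diagonal (fun i => I i i)
        + (((μ₂ : ℂ) ^ 2) * I.trace) • (1 : Matrix (Fin Q) (Fin Q) ℂ))
    ∧ ((∀ q, I q q = 0) →
        (Matrix.of fun q r : Fin Q =>
          ∫ ω, (dotProduct (star (α ω)) (I *ᵥ α ω)) * (α ω q * (starRingEnd ℂ) (α ω r)) ∂μ)
        = ((μ₂ : ℂ) ^ 2) • I) :=
  srop_anisotropy_general μ α α₀ μ₂ μ₄ hindep hident hmean hsq hL4 hmom2 hmom4 I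
end
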